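/- Let g : [0,1] → ℝ be continuously differentiable, let o, m_o ∈ ℕ with o, m_o ≥ 1 and m := o·m_o, and let 1 ≤ i ≤ m_o. Then, with ξ_{l,m} := l/(m+1) and ξ_{i,m_o} := i/(m_o+1), | (1/o)·Σ_{j=1}^o g(ξ_{(i−1)o+j, m}) − g(ξ_{i,m_o}) | ≤ √(o/(m+1)) · √( ∫_{(i−1)o/(m+1)}^{i·o/(m+1)} g'(t)² dt ). -/

import Mathlib

/-!
All the fine nodes `ξ_{(i-1)o+j, m}` and the coarse node `ξ_{i, m_o}` lie in the cell
`[(i-1)o/(m+1), io/(m+1)]` of length `o/(m+1)`. By the fundamental theorem of calculus and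
Cauchy–Schwarz, any two values of `g` on a cell differ by at most
`√(length) · ‖g'‖_{L²(cell)}`, and hence so does an average of such values from
`g(ξ_{i, m_o})`.
-/

open Real MeasureTheory Set

theorem intervalIntegral_abs_le_sqrt_mul_sqrt_integral_sq {f : ℝ → ℝ} {a b : ℝ}
    (hab : a ≤ b) (hf : ContinuousOn f (Icc a b)) :
    ∫ t in a..b, |f t| ≤ √(b - a) * √(∫ t in a..b, f t ^ 2) := by
  let μ := volume.restrict (Ioc a b)
  have hf2 : MemLp f (ENNReal.ofReal 2) μ := by
    have hmeas : AEStronglyMeasurable f μ :=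
      (hf.mono Ioc_subset_Icc_self).aestronglyMeasurable measurableSet_Ioc
    rw [ENNReal.ofReal_ofNat, memLp_two_iff_integrable_sq hmeas]
    exact ((hf.pow 2).integrableOn_Icc).mono_set Ioc_subset_Icc_self
  have holder := integral_mul_le_Lp_mul_Lq_of_nonneg Real.HolderConjugate.two_two
    (ae_of_all μ fun t => abs_nonneg (f t)) (ae_of_all μ fun _ => zero_le_one)
    hf2.abs (memLp_const 1)
  simp only [mul_one, integral_const, sq_abs, rpow_two] at holder
  rw [intervalIntegral.integral_of_le hab, intervalIntegral.integral_of_le hab, mul_comm,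
    sqrt_eq_rpow, sqrt_eq_rpow]
  simpa [μ, hab] using holder

theorem abs_sub_le_sqrt_mul_sqrt_integral_deriv_sq {g g' : ℝ → ℝ} {a b x y : ℝ}
    (hg : ∀ t ∈ Icc a b, HasDerivWithinAt g (g' t) (Icc a b) t)
    (hg' : ContinuousOn g' (Icc a b)) (hx : x ∈ Icc a b) (hy : y ∈ Icc a b) :
    |g x - g y| ≤ √(b - a) * √(∫ t in a..b, g' t ^ 2) := by
  wlog hyx : y ≤ x generalizing x y
  · rw [abs_sub_comm]
    exact this hy hx (le_of_not_ge hyx)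
  have hsub : Icc y x ⊆ Icc a b := Icc_subset_Icc hy.1 hx.2
  have hftc : ∫ t in y..x, g' t = g x - g y := by
    refine intervalIntegral.integral_eq_sub_of_hasDerivAt_of_le hyx
      (fun t ht => (hg t (hsub ht)).continuousWithinAt.mono hsub) (fun t ht => ?_) ?_
    · exact (hg t (hsub (Ioo_subset_Icc_self ht))).hasDerivAt
        (Icc_mem_nhds (hy.1.trans_lt ht.1) (ht.2.trans_le hx.2))
    · exact (hg'.mono (uIcc_of_le hyx ▸ hsub)).intervalIntegrable
  have hab : a ≤ b := hy.1.trans hy.2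
  calc |g x - g y| = |∫ t in y..x, g' t| := by rw [hftc]
    _ ≤ ∫ t in y..x, |g' t| := intervalIntegral.abs_integral_le_integral_abs hyx
    _ ≤ ∫ t in a..b, |g' t| :=
      intervalIntegral.integral_mono_interval hy.1 hyx hx.2 (ae_of_all _ fun t => abs_nonneg _)
        (hg'.abs.mono (uIcc_of_le hab).subset).intervalIntegrable
    _ ≤ √(b - a) * √(∫ t in a..b, g' t ^ 2) :=
      intervalIntegral_abs_le_sqrt_mul_sqrt_integral_sq hab hg'

theorem Finset.abs_one_div_card_mul_sum_sub_le {ι : Type*} {s : Finset ι} (hs : s.Nonempty)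
    {f : ι → ℝ} {c B : ℝ} (h : ∀ j ∈ s, |f j - c| ≤ B) :
    |(1 / (s.card : ℝ)) * ∑ j ∈ s, f j - c| ≤ B := by
  have hcard : (0 : ℝ) < s.card := by exact_mod_cast hs.card_pos
  have hcentre : (1 / (s.card : ℝ)) * ∑ j ∈ s, f j - c =
      (1 / (s.card : ℝ)) * ∑ j ∈ s, (f j - c) := by
    rw [Finset.sum_sub_distrib, Finset.sum_const, nsmul_eq_mul]
    field_simp
  calc |(1 / (s.card : ℝ)) * ∑ j ∈ s, f j - c|
        = (1 / (s.card : ℝ)) * |∑ j ∈ s, (f j - c)| := by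
        rw [hcentre, abs_mul, abs_of_pos (one_div_pos.2 hcard)]
    _ ≤ (1 / (s.card : ℝ)) * (s.card * B) := by
        gcongr
        exact (Finset.abs_sum_le_sum_abs _ _).trans
          ((Finset.sum_le_card_nsmul _ _ _ h).trans_eq (nsmul_eq_mul _ _))
    _ = B := by field_simp

section UniformGrid

variable {o mo m i : ℕ}

theorem coarse_node_mem_cell (ho : 1 ≤ o) (hm : m = o * mo) (himo : i ≤ mo) :
    (i : ℝ) / ((mo : ℝ) + 1) ∈
      Icc (((i : ℝ) - 1) * o / ((m : ℝ) + 1)) ((i : ℝ) * o / ((m : ℝ) + 1)) := by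
  have hoR : (1 : ℝ) ≤ o := by exact_mod_cast ho
  have himoR : (i : ℝ) ≤ mo := by exact_mod_cast himo
  have hmR : (m : ℝ) = o * mo := by exact_mod_cast hm
  constructor <;> rw [div_le_div_iff₀ (by positivity) (by positivity), hmR] <;>
    nlinarith [mul_le_mul_of_nonneg_left himoR (Nat.cast_nonneg o : (0 : ℝ) ≤ o),
      mul_le_mul_of_nonneg_left hoR (Nat.cast_nonneg i : (0 : ℝ) ≤ i)]

theorem fine_node_mem_cell (hi : 1 ≤ i) {j : ℕ} (hj : j ∈ Finset.Icc 1 o) :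
    (((i - 1) * o + j : ℕ) : ℝ) / ((m : ℝ) + 1) ∈
      Icc (((i : ℝ) - 1) * o / ((m : ℝ) + 1)) ((i : ℝ) * o / ((m : ℝ) + 1)) := by
  obtain ⟨hj1, hjo⟩ := Finset.mem_Icc.mp hj
  have hj1R : (1 : ℝ) ≤ j := by exact_mod_cast hj1
  have hjoR : (j : ℝ) ≤ o := by exact_mod_cast hjo
  rw [Nat.cast_add, Nat.cast_mul, Nat.cast_sub hi, Nat.cast_one]
  constructor <;> gcongr <;> linarith

theorem cell_subset_Icc_zero_one (hm : m = o * mo) (hi : 1 ≤ i) (himo : i ≤ mo) :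
    Icc (((i : ℝ) - 1) * o / ((m : ℝ) + 1)) ((i : ℝ) * o / ((m : ℝ) + 1)) ⊆ Icc 0 1 := by
  have hiR : (1 : ℝ) ≤ i := by exact_mod_cast hi
  have himoR : (i : ℝ) ≤ mo := by exact_mod_cast himo
  have hmR : (m : ℝ) = o * mo := by exact_mod_cast hm
  refine Icc_subset_Icc (by positivity) ?_
  rw [div_le_one (by positivity), hmR]
  nlinarith [mul_le_mul_of_nonneg_right himoR (Nat.cast_nonneg o : (0 : ℝ) ≤ o)]

end UniformGrid

theorem stmt_17 (g g' : ℝ → ℝ)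
    (hg' : ∀ x ∈ Set.Icc (0:ℝ) 1, HasDerivWithinAt g (g' x) (Set.Icc 0 1) x)
    (hcont : ContinuousOn g' (Set.Icc 0 1))
    (o mo : ℕ) (ho : 1 ≤ o) (m : ℕ) (hm : m = o * mo)
    (i : ℕ) (hi1 : 1 ≤ i) (himo : i ≤ mo) :
    |(1 / (o : ℝ)) * (∑ j ∈ Finset.Icc 1 o,
        g ((((i - 1) * o + j : ℕ) : ℝ) / ((m : ℝ) + 1)))
      - g ((i : ℝ) / ((mo : ℝ) + 1))|
      ≤ Real.sqrt ((o : ℝ) / ((m : ℝ) + 1)) *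
        Real.sqrt (∫ t in ((((i : ℝ) - 1) * o) / ((m : ℝ) + 1))..(((i : ℝ) * o) / ((m : ℝ) + 1)),
          g' t ^ 2) := by
  have hcell := cell_subset_Icc_zero_one hm hi1 himo
  have hcard : (Finset.Icc 1 o).card = o := by simp
  have hwidth : (i : ℝ) * o / ((m : ℝ) + 1) - ((i : ℝ) - 1) * o / ((m : ℝ) + 1) =
      o / ((m : ℝ) + 1) := by ring
  have hbound := Finset.abs_one_div_card_mul_sum_sub_le (Finset.nonempty_Icc.mpr ho) fun j hj =>
    abs_sub_le_sqrt_mul_sqrt_integral_deriv_sq (fun t ht => (hg' t (hcell ht)).mono hcell)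
      (hcont.mono hcell) (fine_node_mem_cell hi1 hj) (coarse_node_mem_cell ho hm himo)
  rwa [hcard, hwidth] at hbound
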